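/- Let α ∈ [0, π/3), θ ∈ (π, 2π) with cos θ = cos α − 1/2, and let Λ be the Lobachevsky function. Then Λ((α−θ)/2) > Λ((α+θ)/2), i.e. the quantity −2(Λ((α+θ)/2) − Λ((α−θ)/2)) is strictly positive. -/

import Mathlib

/-!
The cosine condition forces `π + α < θ < 2π - α`, so `π + (α - θ)/2` and `π - (α + θ)/2` both lie
in `(0, π/2)`. As `Λ` is odd and `π`-periodic, `Λ((α - θ)/2) - Λ((α + θ)/2)` is the sum of the
values of `Λ` at these two points, and `Λ > 0` on `(0, π/2)`: the integrand `log |2 sin t|` is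
negative on `(0, π/6)` and positive on `(π/6, π/2)`, while `Λ(π/2) = 0`.
-/

open Real intervalIntegral
open MeasureTheory (volume)

noncomputable def lobachevsky (x : ℝ) : ℝ := -∫ t in (0 : ℝ)..x, log |2 * sin t|

theorem intervalIntegrable_log_abs_two_mul_sin (a b : ℝ) :
    IntervalIntegrable (fun t => log |2 * sin t|) volume a b :=
  ((analyticOnNhd_const.mul analyticOnNhd_sin).meromorphicOn.intervalIntegrable_log_norm :
    IntervalIntegrable (fun t => log ‖2 * sin t‖) volume a b)

theorem integral_log_abs_two_mul_sin_zero_pi : ∫ t in (0 : ℝ)..π, log |2 * sin t| = 0 := by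
  have hlog_mul :
      ∫ t in (0 : ℝ)..π, log |2 * sin t| = ∫ t in (0 : ℝ)..π, (log 2 + log (sin t)) := by
    simp only [integral_of_le pi_pos.le, MeasureTheory.integral_Ioc_eq_integral_Ioo]
    refine MeasureTheory.setIntegral_congr_fun measurableSet_Ioo fun t ht => ?_
    have hsin : 0 < sin t := sin_pos_of_pos_of_lt_pi ht.1 ht.2
    rw [log_abs, log_mul two_ne_zero hsin.ne']
  have hlog_sin : IntervalIntegrable (fun t => log (sin t)) volume 0 π :=
    intervalIntegrable_log_sin
  rw [hlog_mul, integral_add intervalIntegrable_const hlog_sin, integral_log_sin_zero_pi,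
    integral_const, smul_eq_mul, sub_zero]
  ring

theorem periodic_log_abs_two_mul_sin : Function.Periodic (fun t => log |2 * sin t|) π := by
  intro t
  simp only [sin_add_pi, mul_neg, abs_neg]

theorem lobachevsky_periodic : Function.Periodic lobachevsky π := by
  intro x
  have hadd := integral_add_adjacent_intervals (intervalIntegrable_log_abs_two_mul_sin 0 x)
    (intervalIntegrable_log_abs_two_mul_sin x (x + π))
  rw [periodic_log_abs_two_mul_sin.intervalIntegral_add_eq x 0, zero_add,
    integral_log_abs_two_mul_sin_zero_pi, add_zero] at hadd
  rw [lobachevsky, lobachevsky, hadd]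

theorem lobachevsky_neg (x : ℝ) : lobachevsky (-x) = -lobachevsky x := by
  have hcomp := integral_comp_neg (a := 0) (b := x) fun t => log |2 * sin t|
  simp only [sin_neg, mul_neg, abs_neg, neg_zero] at hcomp
  rw [lobachevsky, lobachevsky, hcomp, integral_symm]

theorem lobachevsky_pi_div_two : lobachevsky (π / 2) = 0 := by
  have hper := lobachevsky_periodic (-(π / 2))
  rw [lobachevsky_neg, show -(π / 2) + π = π / 2 by ring] at hper
  linarith

theorem lobachevsky_pos {x : ℝ} (hx0 : 0 < x) (hx : x < π / 2) : 0 < lobachevsky x := by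
  rcases le_total x (π / 6) with hx6 | hx6
  · have hneg : 0 < ∫ t in (0 : ℝ)..x, -log |2 * sin t| := by
      refine intervalIntegral_pos_of_pos_on (intervalIntegrable_log_abs_two_mul_sin 0 x).neg
        (fun t ht => ?_) hx0
      have hsin : 0 < sin t := sin_pos_of_pos_of_lt_pi ht.1 (by linarith [pi_pos, ht.2])
      have hsin6 : sin t < 1 / 2 := by
        rw [← sin_pi_div_six]
        exact sin_lt_sin_of_lt_of_le_pi_div_two (by linarith [ht.1]) (by linarith)
          (by linarith [ht.2])
      rw [abs_of_pos (by positivity), neg_pos]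
      exact log_neg (by positivity) (by linarith)
    rwa [integral_neg] at hneg
  · have hpos : 0 < ∫ t in x..π / 2, log |2 * sin t| := by
      refine intervalIntegral_pos_of_pos_on (intervalIntegrable_log_abs_two_mul_sin x (π / 2))
        (fun t ht => ?_) hx
      have hsin6 : 1 / 2 < sin t := by
        rw [← sin_pi_div_six]
        exact sin_lt_sin_of_lt_of_le_pi_div_two (by linarith [pi_pos]) ht.2.le
          (by linarith [ht.1])
      rw [abs_of_pos (by linarith)]
      exact log_pos (by linarith)
    have hadd := integral_add_adjacent_intervals (intervalIntegrable_log_abs_two_mul_sin 0 x)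
      (intervalIntegrable_log_abs_two_mul_sin x (π / 2))
    have hhalf := lobachevsky_pi_div_two
    rw [lobachevsky, ← hadd] at hhalf
    rw [lobachevsky]
    linarith

theorem lobachevsky_difference_pos
    (Λ : ℝ → ℝ) (hΛ : ∀ x : ℝ, Λ x = -∫ t in (0:ℝ)..x, Real.log |2 * Real.sin t|)
    (α θ : ℝ) (hα0 : 0 ≤ α) (hα1 : α < Real.pi / 3)
    (hθ : θ ∈ Set.Ioo Real.pi (2 * Real.pi))
    (hcos : Real.cos θ = Real.cos α - 1 / 2) :
    Λ ((α - θ) / 2) > Λ ((α + θ) / 2) := by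
  obtain rfl : Λ = lobachevsky := funext hΛ
  obtain ⟨hθπ, hθ2π⟩ := hθ
  have hcos_two_pi_sub : cos (2 * π - θ) = cos α - 1 / 2 := by rw [cos_two_pi_sub, hcos]
  have hcosα : 1 / 2 < cos α := by
    rw [← cos_pi_div_three]
    exact cos_lt_cos_of_nonneg_of_le_pi hα0 (by linarith [pi_pos]) hα1
  have hmem : ∀ y, 0 ≤ y → y ≤ π → y ∈ Set.Icc 0 π := fun y h0 h1 => ⟨h0, h1⟩
  have hθ_lt : θ < 2 * π - α := by
    have := (strictAntiOn_cos.lt_iff_gt (hmem (2 * π - θ) (by linarith) (by linarith))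
      (hmem α hα0 (by linarith))).1 (by linarith)
    linarith
  have hθ_gt : π + α < θ := by
    have := (strictAntiOn_cos.lt_iff_gt (hmem (π - α) (by linarith) (by linarith))
      (hmem (2 * π - θ) (by linarith) (by linarith))).1 (by rw [cos_pi_sub]; linarith)
    linarith
  calc lobachevsky ((α + θ) / 2)
      = -lobachevsky (π - (α + θ) / 2) := by
        rw [← lobachevsky_neg, neg_sub, lobachevsky_periodic.sub_eq]
    _ < lobachevsky (π + (α - θ) / 2) := by
        linarith [lobachevsky_pos (x := π - (α + θ) / 2) (by linarith) (by linarith),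
          lobachevsky_pos (x := π + (α - θ) / 2) (by linarith) (by linarith)]
    _ = lobachevsky ((α - θ) / 2) := by rw [add_comm, lobachevsky_periodic]
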